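/- Existence of limits of Krein observables along the evolution (Proposition D.1(2)). Let C1(t), B_1(t), ..., B_N(t) be strongly continuous families of bounded operators on H for t ≥ 0 and c_1, ..., c_N ≥ 0, and assume: (a) for every u ∈ H the function f_u(t) := [P u_t, Φ(t) P u_t] is differentiable on [0,∞) with f_u'(t) = ⟨P u_t, C1(t) P u_t⟩; (b) |⟨w, C1(t) w⟩| ≤ Σ_{1≤j,k≤N} ‖B_j(t) w‖ · ‖B_k(t) w‖ for all w ∈ H; (c) ∫_0^∞ ‖B_j(t) P u_t‖² dt ≤ c_j ‖u‖² for every u ∈ H and every j. Then for every u ∈ H the limit lim_{t→+∞} [P u_t, Φ(t) P u_t] exists. -/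

import Mathlib

open MeasureTheory Set Filter
open scoped ComplexInnerProductSpace Topology

/-!
The derivative ⟨P u_t, C1(t) P u_t⟩ of the observable is bounded by (b) by a finite sum of products
‖B_j(t) P u_t‖ ‖B_k(t) P u_t‖ of functions that lie in L²(0, ∞) by (c), so it is integrable on
(0, ∞), and a function with integrable derivative converges at +∞. Measurability of these
integrands rests on the continuity of t ↦ T(t) w(t) for strongly continuous T and continuous w,
which follows from the local uniform bound on ‖T(t)‖ given by Banach–Steinhaus.
-/

section StronglyContinuous

variable {X 𝕜 E F : Type*} [TopologicalSpace X] [NontriviallyNormedField 𝕜]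
  [NormedAddCommGroup E] [NormedSpace 𝕜 E] [NormedAddCommGroup F] [NormedSpace 𝕜 F]
  {T : X → E →L[𝕜] F} {w : X → E} {s : Set X}

theorem ContinuousWithinAt.clm_apply_of_eventually_norm_le {x : X} {M : ℝ}
    (hT : ∀ v, ContinuousWithinAt (fun y => T y v) s x) (hw : ContinuousWithinAt w s x)
    (hM : ∀ᶠ y in 𝓝[s] x, ‖T y‖ ≤ M) :
    ContinuousWithinAt (fun y => T y (w y)) s x := by
  have hsmall : Tendsto (fun y => T y (w y - w x)) (𝓝[s] x) (𝓝 0) := by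
    refine squeeze_zero_norm' (a := fun y => M * ‖w y - w x‖) ?_ ?_
    · filter_upwards [hM] with y hy
      exact (T y).le_opNorm _ |>.trans (mul_le_mul_of_nonneg_right hy (norm_nonneg _))
    · simpa using ((hw.sub_const (w x)).norm.const_mul M)
  simpa [ContinuousWithinAt] using hsmall.add (hT (w x))

theorem exists_eventually_norm_le_of_continuousOn_apply [WeaklyLocallyCompactSpace X]
    [CompleteSpace E] (hs : IsClosed s) (hT : ∀ v, ContinuousOn (fun y => T y v) s) (x : X) :
    ∃ M, ∀ᶠ y in 𝓝[s] x, ‖T y‖ ≤ M := by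
  obtain ⟨C, hCcompact, hCx⟩ := exists_compact_mem_nhds x
  have hsC : IsCompact (s ∩ C) := hCcompact.inter_left hs
  obtain ⟨M, hM⟩ := banach_steinhaus (g := fun y : ↥(s ∩ C) => T y) fun v => by
    obtain ⟨b, hb⟩ := hsC.exists_bound_of_continuousOn ((hT v).mono inter_subset_left)
    exact ⟨b, fun y => hb y y.2⟩
  exact ⟨M, mem_of_superset (inter_mem_nhdsWithin s hCx) fun y hy => hM ⟨y, hy⟩⟩

theorem ContinuousOn.clm_apply_of_continuousOn_apply [WeaklyLocallyCompactSpace X]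
    [CompleteSpace E] (hs : IsClosed s) (hT : ∀ v, ContinuousOn (fun y => T y v) s)
    (hw : ContinuousOn w s) :
    ContinuousOn (fun y => T y (w y)) s := fun x hx =>
  have ⟨_, hM⟩ := exists_eventually_norm_le_of_continuousOn_apply hs hT x
  ContinuousWithinAt.clm_apply_of_eventually_norm_le (fun v => hT v x hx) (hw x hx) hM

end StronglyContinuous

namespace MeasureTheory

variable {α E : Type*} [MeasurableSpace α] {μ : Measure α} [NormedAddCommGroup E]

theorem memLp_two_of_lintegral_sq_lt_top {f : α → ℝ} (hf : AEStronglyMeasurable f μ)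
    (hfin : ∫⁻ x, ENNReal.ofReal (f x ^ 2) ∂μ < ⊤) : MemLp f 2 μ :=
  (memLp_two_iff_integrable_sq hf).2 ⟨hf.pow 2,
    (hasFiniteIntegral_iff_ofReal (.of_forall fun x => sq_nonneg (f x))).2 hfin⟩

theorem Integrable.of_norm_le_sum_mul {ι : Type*} [Fintype ι] {g : α → E} {h : ι → α → ℝ}
    (hg : AEStronglyMeasurable g μ) (hh : ∀ j, MemLp (h j) 2 μ)
    (hle : ∀ᵐ x ∂μ, ‖g x‖ ≤ ∑ j, ∑ k, h j x * h k x) : Integrable g μ :=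
  .mono' (integrable_finsetSum _ fun j _ => integrable_finsetSum _ fun k _ =>
    (hh j).integrable_mul (hh k)) hg hle

end MeasureTheory

theorem abstract_limit_of_krein_observable_general
    {H : Type*} [NormedAddCommGroup H] [InnerProductSpace ℂ H] [CompleteSpace H]
    (K : H →L[ℂ] H)
    (U : ℝ → H →L[ℂ] H)
    (hUcont : ∀ u : H, Continuous fun t : ℝ => U t u)
    (P : H →L[ℂ] H)
    (Φ : ℝ → H →L[ℂ] H)
    (N : ℕ) (C1 : ℝ → H →L[ℂ] H) (B' : Fin N → ℝ → H →L[ℂ] H)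
    (hC1cont : ∀ u : H, ContinuousOn (fun t : ℝ => C1 t u) (Ici 0))
    (hB'cont : ∀ (j : Fin N) (u : H), ContinuousOn (fun t : ℝ => B' j t u) (Ici 0))
    (c : Fin N → ℝ)
    -- (a) the Heisenberg derivative identity
    (ha : ∀ u : H, ∀ t ∈ Ici (0:ℝ),
      HasDerivWithinAt
        (fun s : ℝ => ⟪P (U s u), ((1 : H →L[ℂ] H) + K) (Φ s (P (U s u)))⟫)
        (⟪P (U t u), C1 t (P (U t u))⟫) (Ici 0) t)
    -- (b) bound on C1(t)
    (hc1 : ∀ t ∈ Ici (0:ℝ), ∀ w : H,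
      ‖⟪w, C1 t w⟫‖ ≤ ∑ j : Fin N, ∑ k : Fin N, ‖B' j t w‖ * ‖B' k t w‖)
    -- (c) integral propagation estimates for the B_j
    (hd : ∀ (u : H) (j : Fin N),
      ∫⁻ t in Ioi (0:ℝ), ENNReal.ofReal (‖B' j t (P (U t u))‖ ^ 2)
        ≤ ENNReal.ofReal (c j * ‖u‖ ^ 2)) :
    ∀ u : H, ∃ l : ℂ,
      Tendsto (fun t : ℝ => ⟪P (U t u), ((1 : H →L[ℂ] H) + K) (Φ t (P (U t u)))⟫)
        atTop (𝓝 l) := by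
  intro u
  have hw : ContinuousOn (fun t => P (U t u)) (Ici 0) :=
    (P.continuous.comp (hUcont u)).continuousOn
  have hB : ∀ j, ContinuousOn (fun t => B' j t (P (U t u))) (Ioi 0) := fun j =>
    (ContinuousOn.clm_apply_of_continuousOn_apply isClosed_Ici (hB'cont j) hw).mono
      Ioi_subset_Ici_self
  have hC : ContinuousOn (fun t => ⟪P (U t u), C1 t (P (U t u))⟫) (Ioi 0) :=
    (hw.inner (ContinuousOn.clm_apply_of_continuousOn_apply isClosed_Ici hC1cont hw)).mono
      Ioi_subset_Ici_self
  have hL2 : ∀ j, MemLp (fun t => ‖B' j t (P (U t u))‖) 2 (volume.restrict (Ioi 0)) := fun j =>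
    memLp_two_of_lintegral_sq_lt_top ((hB j).norm.aestronglyMeasurable measurableSet_Ioi)
      ((hd u j).trans_lt ENNReal.ofReal_lt_top)
  have hderiv_int : IntegrableOn (fun t => ⟪P (U t u), C1 t (P (U t u))⟫) (Ioi 0) :=
    Integrable.of_norm_le_sum_mul (hC.aestronglyMeasurable measurableSet_Ioi) hL2 <|
      (ae_restrict_iff' measurableSet_Ioi).2 <| .of_forall fun t ht => hc1 t (mem_Ici.2 ht.le) _
  exact ⟨_, tendsto_limUnder_of_hasDerivAt_of_integrableOn_Ioi
    (fun t ht => (ha u t (mem_Ici.2 ht.le)).hasDerivAt (Ici_mem_nhds ht)) hderiv_int⟩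

/-- **Existence of limits of Krein observables along the evolution** (Proposition D.1(2)). -/
theorem abstract_limit_of_krein_observable
    {H : Type*} [NormedAddCommGroup H] [InnerProductSpace ℂ H] [CompleteSpace H]
    (K : H →L[ℂ] H) (hK : IsSelfAdjoint K)
    (hKunit : IsUnit ((1 : H →L[ℂ] H) + K))
    (U : ℝ → H →L[ℂ] H) (hU0 : U 0 = 1)
    (hUgrp : ∀ s t : ℝ, U (s + t) = (U s).comp (U t))
    (hUcont : ∀ u : H, Continuous fun t : ℝ => U t u)
    (hUkrein : ∀ (t : ℝ) (u v : H),
      ⟪U t u, ((1 : H →L[ℂ] H) + K) (U t v)⟫ = ⟪u, ((1 : H →L[ℂ] H) + K) v⟫)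
    (P : H →L[ℂ] H) (hPU : ∀ t : ℝ, P.comp (U t) = (U t).comp P)
    (hUPbdd : ∃ Cb : ℝ, ∀ t : ℝ, 0 ≤ t → ‖(U t).comp P‖ ≤ Cb)
    (Φ : ℝ → H →L[ℂ] H)
    (hΦcont : ∀ u : H, ContinuousOn (fun t : ℝ => Φ t u) (Ici 0))
    (hΦbdd : ∃ CΦ : ℝ, ∀ t : ℝ, 0 ≤ t → ‖Φ t‖ ≤ CΦ)
    (N : ℕ) (C1 : ℝ → H →L[ℂ] H) (B' : Fin N → ℝ → H →L[ℂ] H)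
    (hC1cont : ∀ u : H, ContinuousOn (fun t : ℝ => C1 t u) (Ici 0))
    (hB'cont : ∀ (j : Fin N) (u : H), ContinuousOn (fun t : ℝ => B' j t u) (Ici 0))
    (c : Fin N → ℝ) (hc : ∀ j, 0 ≤ c j)
    -- (a) the Heisenberg derivative identity
    (ha : ∀ u : H, ∀ t ∈ Ici (0:ℝ),
      HasDerivWithinAt
        (fun s : ℝ => ⟪P (U s u), ((1 : H →L[ℂ] H) + K) (Φ s (P (U s u)))⟫)
        (⟪P (U t u), C1 t (P (U t u))⟫) (Ici 0) t)
    -- (b) bound on C1(t)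
    (hc1 : ∀ t ∈ Ici (0:ℝ), ∀ w : H,
      ‖⟪w, C1 t w⟫‖ ≤ ∑ j : Fin N, ∑ k : Fin N, ‖B' j t w‖ * ‖B' k t w‖)
    -- (c) integral propagation estimates for the B_j
    (hd : ∀ (u : H) (j : Fin N),
      ∫⁻ t in Ioi (0:ℝ), ENNReal.ofReal (‖B' j t (P (U t u))‖ ^ 2)
        ≤ ENNReal.ofReal (c j * ‖u‖ ^ 2)) :
    ∀ u : H, ∃ l : ℂ,
      Tendsto (fun t : ℝ => ⟪P (U t u), ((1 : H →L[ℂ] H) + K) (Φ t (P (U t u)))⟫)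
        atTop (𝓝 l) :=
  abstract_limit_of_krein_observable_general K U hUcont P Φ N C1 B' hC1cont hB'cont c ha hc1 hd
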